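/- For every t > 0 and k ∈ ℕ: (k!(n-1)!/(k+n-1)!) ∫_{ℝ^{2n}} p^λ_{2t}(2y,2v) φ^{n-1}_{k,λ}(2y,2v) dy dv = c_λ e^{-2t(2k+n)|λ|}, with c_λ depending only on λ and n. -/

import Mathlib

open MeasureTheory Complex

noncomputable section

/-- The special Hermite heat kernel
`p^λ_t(x,u) = (4π)^{-n} λ^n (sinh tλ)^{-n} e^{-(λ/4)(coth tλ)(|x|²+|u|²)}`. -/
def twistedHeatKernelR {n : ℕ} (lam t : ℝ)
    (p : (Fin n → ℝ) × (Fin n → ℝ)) : ℝ :=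
  (4 * Real.pi) ^ (-(n : ℤ)) * lam ^ n * (Real.sinh (t * lam)) ^ (-(n : ℤ)) *
    Real.exp (-(lam / 4) * (Real.cosh (t * lam) / Real.sinh (t * lam)) *
      ((∑ j, (p.1 j) ^ 2) + ∑ j, (p.2 j) ^ 2))

/-- The generalized Laguerre polynomial `L_k^a(x)`. -/
def laguerre (a k : ℕ) (x : ℝ) : ℝ :=
  ∑ i ∈ Finset.range (k + 1),
    (-1 : ℝ) ^ i * ((k + a).choose (k - i)) * x ^ i / (i.factorial)

/-! After the dilation `q ↦ 2q`, the heat kernel times `e^{-|λ|S/4}` (with `S = |x|² + |u|²`) is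
again a Gaussian `e^{-aS}`, `a = |λ| e^u / sinh u`, `u = 2t|λ|`, because `coth u + 1 = e^u / sinh u`
(the kernel only depends on `|λ|`). The integrand is therefore radial on `ℝ^{2n}`, and polar
coordinates together with the Gamma integral give, term by term in the Laguerre sum,
`∫_0^∞ r^{2n-1} L_k^{n-1}(2|λ|r²) e^{-ar²} dr = (k+n-1)!/(2 k!) · (a - 2|λ|)^k / a^{n+k}`.
Since `|λ| / sinh u = a e^{-u}` and `a - 2|λ| = a e^{-2u}`, what remains is a constant times
`e^{-u(2k+n)}`. -/

open MeasureTheory Finset Set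

theorem choose_add_sub_mul_factorial_mul_factorial (m k i : ℕ) (h : i ≤ k) :
    (k + m).choose (k - i) * (m + i).factorial * k.factorial =
      (k + m).factorial * k.choose i * i.factorial := by
  have hkm := Nat.choose_mul_factorial_mul_factorial (show k - i ≤ k + m by omega)
  rw [show k + m - (k - i) = m + i by omega] at hkm
  have hk := Nat.choose_mul_factorial_mul_factorial h
  apply Nat.eq_of_mul_eq_mul_right (Nat.factorial_pos (k - i))
  calc _ = (k + m).choose (k - i) * (k - i).factorial * (m + i).factorial * k.factorial := by ring
    _ = (k + m).factorial * (k.choose i * i.factorial * (k - i).factorial) := by rw [hkm, hk]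
    _ = _ := by ring

theorem integral_pow_mul_exp_neg_mul_sq_Ioi (p : ℕ) {a : ℝ} (ha : 0 < a) :
    ∫ r in Ioi (0 : ℝ), r ^ (2 * p + 1) * Real.exp (-a * r ^ 2) =
      p.factorial / (2 * a ^ (p + 1)) := by
  have hq : (-1 : ℝ) < ((2 * p + 1 : ℕ) : ℝ) := neg_one_lt_zero.trans_le (Nat.cast_nonneg _)
  have hexp : (((2 * p + 1 : ℕ) : ℝ) + 1) / 2 = (p : ℝ) + 1 := by push_cast; ring
  calc _ = ∫ r in Ioi (0 : ℝ), r ^ ((2 * p + 1 : ℕ) : ℝ) * Real.exp (-a * r ^ (2 : ℝ)) := by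
        simp only [Real.rpow_natCast, Real.rpow_two]
    _ = _ := by
      rw [integral_rpow_mul_exp_neg_mul_rpow two_pos hq ha, neg_div, hexp, Real.rpow_neg ha.le,
        Real.Gamma_nat_eq_factorial, ← Nat.cast_succ, Real.rpow_natCast]
      field_simp

theorem sum_laguerre_coeff_mul_moment (m k : ℕ) {a : ℝ} (ha : a ≠ 0) (b : ℝ) :
    ∑ i ∈ range (k + 1), (-1 : ℝ) ^ i * (k + m).choose (k - i) * b ^ i / i.factorial *
        ((m + i).factorial / (2 * a ^ (m + i + 1))) =
      (k + m).factorial / (2 * k.factorial) * (a - b) ^ k / a ^ (m + k + 1) := by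
  rw [sub_eq_neg_add, add_pow, mul_sum, sum_div]
  refine sum_congr rfl fun i hi => ?_
  have hik : i ≤ k := Nat.lt_succ_iff.mp (mem_range.mp hi)
  have hcoeff : ((k + m).choose (k - i) : ℝ) * (m + i).factorial * k.factorial =
      (k + m).factorial * k.choose i * i.factorial := by
    exact_mod_cast choose_add_sub_mul_factorial_mul_factorial m k i hik
  rw [show m + k + 1 = m + i + 1 + (k - i) by omega, pow_add, neg_pow]
  field_simp
  linear_combination (-1) ^ i * b ^ i * a ^ (m + i + 1) * a ^ (k - i) * hcoeff

theorem integral_pow_mul_laguerre_mul_exp_neg_mul_sq_Ioi (m k : ℕ) {a : ℝ} (ha : 0 < a) (b : ℝ) :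
    ∫ r in Ioi (0 : ℝ), r ^ (2 * m + 1) * (laguerre m k (b * r ^ 2) * Real.exp (-a * r ^ 2)) =
      (k + m).factorial / (2 * k.factorial) * (a - b) ^ k / a ^ (m + k + 1) := by
  have hexpand : ∀ r : ℝ, r ^ (2 * m + 1) * (laguerre m k (b * r ^ 2) * Real.exp (-a * r ^ 2)) =
      ∑ i ∈ range (k + 1), (-1 : ℝ) ^ i * (k + m).choose (k - i) * b ^ i / i.factorial *
        (r ^ (2 * (m + i) + 1) * Real.exp (-a * r ^ 2)) := fun r => by
    rw [laguerre, sum_mul, mul_sum]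
    refine sum_congr rfl fun i _ => ?_
    ring
  have hint (p : ℕ) :
      IntegrableOn (fun r : ℝ => r ^ (2 * p + 1) * Real.exp (-a * r ^ 2)) (Ioi 0) := by
    simpa only [Real.rpow_natCast] using integrableOn_rpow_mul_exp_neg_mul_sq ha
      (s := ((2 * p + 1 : ℕ) : ℝ)) (neg_one_lt_zero.trans_le (Nat.cast_nonneg _))
  simp_rw [hexpand]
  rw [integral_finsetSum _ fun i _ => (hint (m + i)).const_mul _,
    ← sum_laguerre_coeff_mul_moment m k ha.ne' b]
  refine sum_congr rfl fun i _ => ?_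
  rw [integral_const_mul, integral_pow_mul_exp_neg_mul_sq_Ioi (m + i) ha]

def EuclideanSpace.measurableEquivProdPi (m n : ℕ) :
    EuclideanSpace ℝ (Fin (m + n)) ≃ᵐ (Fin m → ℝ) × (Fin n → ℝ) :=
  (MeasurableEquiv.toLp 2 _).symm.trans
    ((MeasurableEquiv.piCongrLeft (fun _ => ℝ) finSumFinEquiv.symm).trans
      (MeasurableEquiv.sumPiEquivProdPi _))

theorem EuclideanSpace.measurePreserving_measurableEquivProdPi (m n : ℕ) :
    MeasurePreserving (EuclideanSpace.measurableEquivProdPi m n) :=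
  (volume_measurePreserving_sumPiEquivProdPi _).comp
    ((volume_measurePreserving_piCongrLeft _ _).comp
      (EuclideanSpace.volume_preserving_symm_measurableEquiv_toLp _))

theorem EuclideanSpace.norm_sq_eq_measurableEquivProdPi {m n : ℕ}
    (x : EuclideanSpace ℝ (Fin (m + n))) :
    ‖x‖ ^ 2 =
      ∑ j, (measurableEquivProdPi m n x).1 j ^ 2 + ∑ j, (measurableEquivProdPi m n x).2 j ^ 2 := by
  simp [measurableEquivProdPi, EuclideanSpace.norm_sq_eq, Fin.sum_univ_add,
    MeasurableEquiv.piCongrLeft, Equiv.piCongrLeft, Equiv.piCongrLeft',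
    MeasurableEquiv.sumPiEquivProdPi, Equiv.sumPiEquivProdPi]

theorem integral_prod_fun_sum_sq_eq_radial {m n : ℕ} (hmn : 0 < m + n) (F : ℝ → ℝ) :
    ∫ q : (Fin m → ℝ) × (Fin n → ℝ), F (∑ j, q.1 j ^ 2 + ∑ j, q.2 j ^ 2) =
      (m + n) * volume.real (Metric.ball (0 : EuclideanSpace ℝ (Fin (m + n))) 1) *
        ∫ r in Ioi (0 : ℝ), r ^ (m + n - 1) * F (r ^ 2) := by
  have : Nonempty (Fin (m + n)) := ⟨⟨0, hmn⟩⟩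
  rw [← (EuclideanSpace.measurePreserving_measurableEquivProdPi m n).integral_comp
    (MeasurableEquiv.measurableEmbedding _)]
  simp_rw [← EuclideanSpace.norm_sq_eq_measurableEquivProdPi]
  rw [integral_fun_norm_addHaar volume (fun r => F (r ^ 2)), finrank_euclideanSpace_fin,
    nsmul_eq_mul, Nat.cast_add, mul_assoc]
  simp only [smul_eq_mul]

theorem sum_two_mul_sq {ι : Type*} [Fintype ι] (x : ι → ℝ) :
    ∑ j, (2 * x j) ^ 2 = 4 * ∑ j, x j ^ 2 := by
  rw [Finset.mul_sum]
  exact Finset.sum_congr rfl fun j _ => by ring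

theorem twistedHeatKernelR_eq {n : ℕ} (lam t : ℝ) (p : (Fin n → ℝ) × (Fin n → ℝ)) :
    twistedHeatKernelR lam t p = (4 * Real.pi) ^ (-(n : ℤ)) * (lam / Real.sinh (t * lam)) ^ n *
      Real.exp (-(lam * Real.cosh (t * lam) / Real.sinh (t * lam)) / 4 *
        (∑ j, p.1 j ^ 2 + ∑ j, p.2 j ^ 2)) := by
  simp only [twistedHeatKernelR, zpow_neg, zpow_natCast, div_pow]
  ring_nf

theorem twistedHeatKernelR_abs {n : ℕ} (lam t : ℝ) (p : (Fin n → ℝ) × (Fin n → ℝ)) :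
    twistedHeatKernelR |lam| t p = twistedHeatKernelR lam t p := by
  rcases abs_choice lam with h | h
  · rw [h]
  · rw [h, twistedHeatKernelR_eq, twistedHeatKernelR_eq, mul_neg, Real.sinh_neg, Real.cosh_neg,
      neg_div_neg_eq, neg_mul, neg_div_neg_eq]

theorem twistedHeatKernelR_mul_exp {n : ℕ} {lam t : ℝ} (h : Real.sinh (t * lam) ≠ 0)
    (p : (Fin n → ℝ) × (Fin n → ℝ)) :
    twistedHeatKernelR lam t p * Real.exp (-(lam / 4) * (∑ j, p.1 j ^ 2 + ∑ j, p.2 j ^ 2)) =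
      (4 * Real.pi) ^ (-(n : ℤ)) * (lam / Real.sinh (t * lam)) ^ n *
        Real.exp (-(lam * Real.exp (t * lam) / Real.sinh (t * lam)) / 4 *
          (∑ j, p.1 j ^ 2 + ∑ j, p.2 j ^ 2)) := by
  rw [twistedHeatKernelR_eq, mul_assoc, ← Real.exp_add, ← Real.cosh_add_sinh (t * lam)]
  congr 2
  linear_combination lam / 4 * (∑ j, p.1 j ^ 2 + ∑ j, p.2 j ^ 2) * div_self h

theorem twistedHeatKernelR_two_mul_mul_laguerre {n : ℕ} {lam t : ℝ}
    (h : Real.sinh (t * |lam|) ≠ 0) (a k : ℕ) (q : (Fin n → ℝ) × (Fin n → ℝ)) :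
    twistedHeatKernelR lam t (fun j => 2 * q.1 j, fun j => 2 * q.2 j) *
        (laguerre a k (|lam| / 2 * ((∑ j, (2 * q.1 j) ^ 2) + ∑ j, (2 * q.2 j) ^ 2)) *
          Real.exp (-(|lam| / 4) * ((∑ j, (2 * q.1 j) ^ 2) + ∑ j, (2 * q.2 j) ^ 2))) =
      (4 * Real.pi) ^ (-(n : ℤ)) * (|lam| / Real.sinh (t * |lam|)) ^ n *
        (laguerre a k (2 * |lam| * (∑ j, q.1 j ^ 2 + ∑ j, q.2 j ^ 2)) *
          Real.exp (-(|lam| * Real.exp (t * |lam|) / Real.sinh (t * |lam|)) *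
            (∑ j, q.1 j ^ 2 + ∑ j, q.2 j ^ 2))) := by
  have hK := twistedHeatKernelR_mul_exp h (fun j => 2 * q.1 j, fun j => 2 * q.2 j)
  simp only [twistedHeatKernelR_abs] at hK
  rw [mul_left_comm, hK, sum_two_mul_sq, sum_two_mul_sq]
  ring_nf

theorem div_sinh_pow_mul_pow_div_pow {μ u : ℝ} (hμ : μ ≠ 0) (hu : Real.sinh u ≠ 0) (m k : ℕ) :
    (μ / Real.sinh u) ^ (m + 1) * (μ * Real.exp u / Real.sinh u - 2 * μ) ^ k /
        (μ * Real.exp u / Real.sinh u) ^ (m + k + 1) =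
      Real.exp (-u) ^ (2 * k + m + 1) := by
  have he : Real.exp u ≠ 0 := (Real.exp_pos u).ne'
  have ha : μ * Real.exp u / Real.sinh u ≠ 0 := by positivity
  have hdiv : μ / Real.sinh u = μ * Real.exp u / Real.sinh u * Real.exp (-u) := by
    rw [Real.exp_neg]
    field_simp
  have hsub : μ * Real.exp u / Real.sinh u - 2 * μ =
      μ * Real.exp u / Real.sinh u * Real.exp (-u) ^ 2 := by
    have h2s : 2 * Real.sinh u * Real.exp u = Real.exp u ^ 2 - 1 := by
      rw [Real.sinh_eq, Real.exp_neg]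
      field_simp
    rw [Real.exp_neg]
    field_simp
    linear_combination -h2s
  rw [hdiv, hsub]
  generalize μ * Real.exp u / Real.sinh u = a at ha ⊢
  field_simp
  ring

/-- the real-argument Laguerre integral identity
`(k!(n-1)!/(k+n-1)!) ∫ p^λ_{2t}(2y,2v) φ^{n-1}_{k,λ}(2y,2v) dy dv
  = c_λ e^{-2t(2k+n)|λ|}`, where
`φ^{n-1}_{k,λ}(x,u) = L_k^{n-1}((|λ|/2)(|x|²+|u|²)) e^{-(|λ|/4)(|x|²+|u|²)}`. -/
theorem laguerre_real_integral_identity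
    {n : ℕ} (hn : 0 < n) (lam : ℝ) (hlam : lam ≠ 0) :
    ∃ c : ℝ, ∀ (t : ℝ), 0 < t → ∀ k : ℕ,
      ((k.factorial : ℝ) * ((n - 1).factorial : ℝ) / ((k + n - 1).factorial : ℝ)) *
        ∫ q : (Fin n → ℝ) × (Fin n → ℝ),
          twistedHeatKernelR lam (2 * t) (fun j => 2 * q.1 j, fun j => 2 * q.2 j) *
            (laguerre (n - 1) k
                (|lam| / 2 * ((∑ j, (2 * q.1 j) ^ 2) + ∑ j, (2 * q.2 j) ^ 2)) *
              Real.exp (-(|lam| / 4) * ((∑ j, (2 * q.1 j) ^ 2) + ∑ j, (2 * q.2 j) ^ 2))) =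
      c * Real.exp (-(2 * t) * (2 * k + n) * |lam|) := by
  obtain ⟨m, rfl⟩ : ∃ m, n = m + 1 := ⟨n - 1, by omega⟩
  refine ⟨(4 * Real.pi) ^ (-((m + 1 : ℕ) : ℤ)) * (m + 1) *
    volume.real (Metric.ball (0 : EuclideanSpace ℝ (Fin (m + 1 + (m + 1)))) 1) * m.factorial,
    fun t ht k => ?_⟩
  have hμ : 0 < |lam| := abs_pos.2 hlam
  have hs : 0 < Real.sinh (2 * t * |lam|) := Real.sinh_pos_iff.2 (by positivity)
  have ha : 0 < |lam| * Real.exp (2 * t * |lam|) / Real.sinh (2 * t * |lam|) := by positivity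
  have hradial := integral_prod_fun_sum_sq_eq_radial (m := m + 1) (n := m + 1) (by omega)
    fun x => laguerre m k (2 * |lam| * x) *
      Real.exp (-(|lam| * Real.exp (2 * t * |lam|) / Real.sinh (2 * t * |lam|)) * x)
  simp only [Nat.add_sub_cancel, show k + (m + 1) - 1 = k + m by omega,
    twistedHeatKernelR_two_mul_mul_laguerre hs.ne']
  rw [integral_const_mul, hradial, show m + 1 + (m + 1) - 1 = 2 * m + 1 by omega,
    integral_pow_mul_laguerre_mul_exp_neg_mul_sq_Ioi m k ha]
  have hexp : Real.exp (-(2 * t * |lam|)) ^ (2 * k + m + 1) =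
      Real.exp (-(2 * t) * (2 * k + (m + 1 : ℕ)) * |lam|) := by
    rw [← Real.exp_nat_mul]
    push_cast
    ring_nf
  rw [← hexp, ← div_sinh_pow_mul_pow_div_pow hμ.ne' hs.ne' m k]
  push_cast
  field_simp
  ring
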